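/- Let e1, e2, e3 be the standard basis of ℚ³ and let a, b be two of them with a ≠ b, and c the third. Set w = a + b. Then Cone{a,w,c} ∪ Cone{w,b,c} = Cone{a,b,c}, and the interiors of Cone{a,w,c} and Cone{w,b,c} are disjoint. -/

import Mathlib

/-!
Writing points of `Cone{a,b,c}` as `s a + t b + u c`, the cone `Cone{a, a+b, c}` is the part
with `s ≥ t` and `Cone{a+b, b, c}` the part with `t ≥ s`, so together they cover `Cone{a,b,c}`.
A point in both interiors would have, by linear independence of `a, b, c`, coordinates with
`s > t` and `t > s` at once.
-/

def Cone3 (a b c : Fin 3 → ℚ) : Set (Fin 3 → ℚ) :=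
  {x | ∃ s t u : ℚ, 0 ≤ s ∧ 0 ≤ t ∧ 0 ≤ u ∧ x = s • a + t • b + u • c}

def ConeInt3 (a b c : Fin 3 → ℚ) : Set (Fin 3 → ℚ) :=
  {x | ∃ s t u : ℚ, 0 < s ∧ 0 < t ∧ 0 < u ∧ x = s • a + t • b + u • c}

theorem cone3_union_cone3_add (a b c : Fin 3 → ℚ) :
    Cone3 a (a + b) c ∪ Cone3 (a + b) b c = Cone3 a b c := by
  ext x
  constructor
  · rintro (⟨s, t, u, hs, ht, hu, rfl⟩ | ⟨s, t, u, hs, ht, hu, rfl⟩)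
    · exact ⟨s + t, t, u, by linarith, ht, hu, by module⟩
    · exact ⟨s, s + t, u, hs, by linarith, hu, by module⟩
  · rintro ⟨s, t, u, hs, ht, hu, rfl⟩
    rcases le_total t s with h | h
    · exact Or.inl ⟨s - t, t, u, by linarith, ht, hu, by module⟩
    · exact Or.inr ⟨s, t - s, u, hs, by linarith, hu, by module⟩

theorem coeffs_eq_of_linearIndependent {a b c : Fin 3 → ℚ}
    (h : LinearIndependent ℚ ![a, b, c])
    {s t u s' t' u' : ℚ} (heq : s • a + t • b + u • c = s' • a + t' • b + u' • c) :
    s = s' ∧ t = t' := by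
  have hzero : ∑ i, ![s - s', t - t', u - u'] i • ![a, b, c] i = 0 := by
    simp only [Fin.sum_univ_three, Matrix.cons_val_zero, Matrix.cons_val_one, Matrix.cons_val_two,
      Matrix.head_cons, Matrix.tail_cons]
    rw [sub_smul, sub_smul, sub_smul]
    linear_combination (norm := module) heq
  have hcoeff := Fintype.linearIndependent_iff.mp h _ hzero
  exact ⟨sub_eq_zero.mp (by simpa using hcoeff 0), sub_eq_zero.mp (by simpa using hcoeff 1)⟩

theorem coneInt3_inter_coneInt3_add {a b c : Fin 3 → ℚ} (h : LinearIndependent ℚ ![a, b, c]) :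
    ConeInt3 a (a + b) c ∩ ConeInt3 (a + b) b c = ∅ := by
  ext x
  simp only [Set.mem_inter_iff, Set.mem_empty_iff_false, iff_false, not_and]
  rintro ⟨s, t, u, hs, ht, hu, rfl⟩ ⟨s', t', u', hs', ht', hu', hx⟩
  have hab : (s + t) • a + t • b + u • c = s' • a + (s' + t') • b + u' • c := by
    rw [← sub_eq_zero] at hx ⊢
    rw [← hx]
    module
  obtain ⟨h₁, h₂⟩ := coeffs_eq_of_linearIndependent h hab
  linarith

theorem linearIndependent_single_perm (σ : Equiv.Perm (Fin 3)) :
    LinearIndependent ℚ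
      ![(Pi.single (σ 0) 1 : Fin 3 → ℚ), Pi.single (σ 1) 1, Pi.single (σ 2) 1] := by
  have hv : ![(Pi.single (σ 0) 1 : Fin 3 → ℚ), Pi.single (σ 1) 1, Pi.single (σ 2) 1] =
      Pi.basisFun ℚ (Fin 3) ∘ σ := by
    ext i : 1
    fin_cases i <;> simp
  rw [hv]
  exact (Pi.basisFun ℚ (Fin 3)).linearIndependent.comp σ σ.injective

theorem stmt_8 (e : Fin 3 → Fin 3 → ℚ) (he : ∀ i, e i = Pi.single i 1)
    (σ : Equiv.Perm (Fin 3)) (a b c : Fin 3 → ℚ)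
    (ha : a = e (σ 0)) (hb : b = e (σ 1)) (hc : c = e (σ 2)) :
    Cone3 a (a + b) c ∪ Cone3 (a + b) b c = Cone3 a b c ∧
    ConeInt3 a (a + b) c ∩ ConeInt3 (a + b) b c = ∅ := by
  refine ⟨cone3_union_cone3_add a b c, coneInt3_inter_coneInt3_add ?_⟩
  rw [ha, hb, hc, he, he, he]
  exact linearIndependent_single_perm σ
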